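/- Let k ≥ 1 and let 𝔇: X^∞ → X^∞ be the k-dilation map (x_0, x_1, …) ↦ (x_0, …, x_0, x_1, …, x_1, …) repeating each coordinate k times. Then for every probability measure μ on X^∞, H^sd(𝔇_*μ) = (1/k)·H^sd(μ). -/

import Mathlib

/-!
Under the `k`-dilation a length-`n` cylinder has positive measure only if its word is constant on
the blocks `{jk, …, jk + k - 1}`, and those cylinders are exactly the preimages of the
length-`⌈n/k⌉` cylinders, so `E(𝔇_*μ, 𝒫̄^n) = E(μ, 𝒫̄^⌈n/k⌉)`. Writing
`E(μ, 𝒫̄^⌈n/k⌉) / n = (⌈n/k⌉ / n) · E(μ, 𝒫̄^⌈n/k⌉) / ⌈n/k⌉`, the first factor tends to `1/k`, and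
`n ↦ ⌈n/k⌉` tends to infinity and has the section `m ↦ km`, so the limsup of the second factor is
that of `E(μ, 𝒫̄^m) / m`. Finally, multiplication by `1/k` commutes with the supremum over
partitions.
-/

open MeasureTheory Filter
open scoped NNReal ENNReal

/-- `phi x = x * log x` (with `phi 0 = 0` since `Real.log 0 = 0`). -/
noncomputable def phi (x : ℝ) : ℝ := x * Real.log x

/-- Shannon entropy of a finite indexed family of sets w.r.t. a measure. -/
noncomputable def partEnt {Ω : Type*} [MeasurableSpace Ω] (μ : Measure Ω)
    {ι : Type*} [Fintype ι] (A : ι → Set Ω) : ℝ :=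
  -∑ i, phi ((μ (A i)).toReal)

/-- A finite measurable partition, given as an indexed family. -/
structure IsPartition {Ω : Type*} [MeasurableSpace Ω] {ι : Type*} (A : ι → Set Ω) : Prop where
  meas : ∀ i, MeasurableSet (A i)
  disj : Pairwise (Function.onFun Disjoint A)
  cover : (⋃ i, A i) = Set.univ

/-- The length-`n` cylinder partition `𝒫̄^n` of `X^∞` built from the family `A`. -/
def cyl {X ι : Type*} (A : ι → Set X) (n : ℕ) (w : Fin n → ι) : Set (ℕ → X) :=
  {x | ∀ i : Fin n, x i ∈ A (w i)}

/-- Stochastic dynamical entropy of `μ` relative to a partition of `X`. -/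
noncomputable def HsdP {X : Type*} [MeasurableSpace X] (μ : Measure (ℕ → X))
    {ι : Type*} [Fintype ι] (A : ι → Set X) : EReal :=
  limsup (fun n : ℕ => ((partEnt μ (cyl A n) / n : ℝ) : EReal)) atTop

/-- Stochastic dynamical entropy of `μ`. -/
noncomputable def Hsd {X : Type*} [MeasurableSpace X] (μ : Measure (ℕ → X)) : EReal :=
  ⨆ (k : ℕ) (A : Fin k → Set X) (_ : IsPartition A), HsdP μ A

/-- The dynamical join `∨_{i=0}^{n-1} T^{-i} 𝒜`. -/
def dynJoin {Ω ι : Type*} (T : Ω → Ω) (A : ι → Set Ω) (n : ℕ) (w : Fin n → ι) : Set Ω :=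
  {x | ∀ i : Fin n, T^[i] x ∈ A (w i)}

/-- Kolmogorov–Sinai entropy of `T` w.r.t. `ν` and a partition. -/
noncomputable def ksEntP {Ω : Type*} [MeasurableSpace Ω] (T : Ω → Ω) (ν : Measure Ω)
    {ι : Type*} [Fintype ι] (A : ι → Set Ω) : EReal :=
  limsup (fun n : ℕ => ((partEnt ν (dynJoin T A n) / n : ℝ) : EReal)) atTop

/-- Kolmogorov–Sinai entropy of `T` w.r.t. `ν`. -/
noncomputable def ksEnt {Ω : Type*} [MeasurableSpace Ω] (T : Ω → Ω) (ν : Measure Ω) : EReal :=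
  ⨆ (k : ℕ) (A : Fin k → Set Ω) (_ : IsPartition A), ksEntP T ν A

/-- The shift on the path space `X^∞`. -/
def shift {X : Type*} : (ℕ → X) → (ℕ → X) := fun x n => x (n + 1)


open Topology Function

theorem Filter.limsup_comp_of_leftInverse {α β γ : Type*} [CompleteLattice α] {f : Filter β}
    {g : Filter γ} {M : β → γ} {s : γ → β} (hM : Tendsto M f g) (hs : Tendsto s g f)
    (hMs : LeftInverse M s) (u : γ → α) : limsup (u ∘ M) f = limsup u g := by
  refine le_antisymm (limsup_le_limsup_of_le hM) ?_
  calc limsup u g = limsup ((u ∘ M) ∘ s) g := by rw [comp_assoc, hMs.comp_eq_id, comp_id]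
    _ ≤ limsup (u ∘ M) f := limsup_le_limsup_of_le hs

namespace EReal

theorem mul_iSup_of_pos {ι : Sort*} {c : EReal} (hc : 0 < c) (hc' : c ≠ ⊤) (g : ι → EReal) :
    c * ⨆ i, g i = ⨆ i, c * g i := by
  refine le_antisymm ?_ (iSup_le fun i => mul_le_mul_of_nonneg_left (le_iSup g i) hc.le)
  rw [mul_comm, ← le_div_iff_mul_le hc hc']
  exact iSup_le fun i => (le_div_iff_mul_le hc hc').2 <| by
    rw [mul_comm]; exact le_iSup (fun i => c * g i) i

theorem limsup_mul_of_tendsto {α : Type*} {f : Filter α} [NeBot f] {u v : α → EReal} {c : EReal}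
    (hu : Tendsto u f (𝓝 c)) (hc : 0 < c) (hc' : c ≠ ⊤) (hv : 0 ≤ᶠ[f] v) :
    limsup (u * v) f = c * limsup v f := by
  have hu0 : 0 ≤ᶠ[f] u := (hu.eventually (lt_mem_nhds hc)).mono fun _ => le_of_lt
  refine le_antisymm ?_ ?_
  · calc limsup (u * v) f ≤ limsup u f * limsup v f :=
          limsup_mul_le hu0.frequently hv (.inl (hu.limsup_eq ▸ hc.ne')) (.inl (hu.limsup_eq ▸ hc'))
      _ = c * limsup v f := by rw [hu.limsup_eq]
  · calc c * limsup v f = limsup v f * liminf u f := by rw [hu.liminf_eq, mul_comm]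
      _ ≤ limsup (v * u) f := le_limsup_mul hv.frequently hu0
      _ = limsup (u * v) f := by rw [mul_comm]

end EReal

section CeilDiv

variable {k : ℕ}

theorem Nat.tendsto_ceilDiv_atTop (hk : 0 < k) : Tendsto (fun n : ℕ => n ⌈/⌉ k) atTop atTop :=
  (gc_mul_ceilDiv hk).monotone_l.tendsto_atTop_atTop fun m => ⟨k * m, (smul_ceilDiv hk m).ge⟩

theorem Nat.tendsto_ceilDiv_div (hk : 0 < k) :
    Tendsto (fun n : ℕ => ((n ⌈/⌉ k : ℕ) : ℝ) / n) atTop (𝓝 (1 / k)) := by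
  have hkR : (0 : ℝ) < k := by exact_mod_cast hk
  have hupper : Tendsto (fun n : ℕ => 1 / (k : ℝ) + 1 / (n : ℝ)) atTop (𝓝 (1 / k)) := by
    simpa using tendsto_const_nhds.add (tendsto_one_div_atTop_nhds_zero_nat (𝕜 := ℝ))
  refine tendsto_of_tendsto_of_tendsto_of_le_of_le' tendsto_const_nhds hupper ?_ ?_
  all_goals filter_upwards [eventually_gt_atTop 0] with n hn
  all_goals have hnR : (0 : ℝ) < n := by exact_mod_cast hn
  · have : n ≤ k * (n ⌈/⌉ k) := le_smul_ceilDiv hk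
    rw [div_le_div_iff₀ hkR hnR]
    exact_mod_cast (by linarith : 1 * n ≤ n ⌈/⌉ k * k)
  · have : n ⌈/⌉ k * k < n + k := by
      rw [Nat.ceilDiv_eq_add_pred_div]
      exact (Nat.div_mul_le_self _ _).trans_lt (by omega)
    have hR : ((n ⌈/⌉ k : ℕ) : ℝ) * k ≤ n + k := by exact_mod_cast this.le
    rw [div_add_div _ _ hkR.ne' hnR.ne', div_le_div_iff₀ hnR (by positivity)]
    nlinarith

end CeilDiv

section PartitionEntropy

variable {Ω Ω' ι κ : Type*} [MeasurableSpace Ω] [MeasurableSpace Ω'] [Fintype ι] [Fintype κ]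

theorem partEnt_nonneg (μ : Measure Ω) [IsProbabilityMeasure μ] (B : ι → Set Ω) :
    0 ≤ partEnt μ B := by
  refine neg_nonneg.2 (Finset.sum_nonpos fun i _ => ?_)
  have hle : (μ (B i)).toReal ≤ 1 :=
    ENNReal.toReal_le_of_le_ofReal zero_le_one (by simp [prob_le_one])
  exact mul_nonpos_of_nonneg_of_nonpos ENNReal.toReal_nonneg
    (Real.log_nonpos ENNReal.toReal_nonneg hle)

theorem partEnt_map (μ : Measure Ω) {f : Ω → Ω'} (hf : Measurable f) {B : ι → Set Ω'}
    (hB : ∀ i, MeasurableSet (B i)) : partEnt (μ.map f) B = partEnt μ fun i => f ⁻¹' B i := by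
  simp only [partEnt, Measure.map_apply hf (hB _)]

theorem partEnt_comp_of_measure_eq_zero (μ : Measure Ω) {B : ι → Set Ω} {e : κ → ι}
    (he : Injective e) (hB : ∀ i ∉ Set.range e, μ (B i) = 0) : partEnt μ (B ∘ e) = partEnt μ B := by
  unfold partEnt
  congr 1
  exact Fintype.sum_of_injective e he _ _ (fun i hi => by simp [hB i hi, phi]) fun _ => rfl

end PartitionEntropy

section Cylinders

variable {X ι : Type*} {A : ι → Set X}

theorem measurableSet_cyl [MeasurableSpace X] (hA : ∀ i, MeasurableSet (A i)) (n : ℕ)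
    (w : Fin n → ι) : MeasurableSet (cyl A n w) := by
  rw [show cyl A n w = ⋂ i : Fin n, (fun x : ℕ → X => x i) ⁻¹' A (w i) by ext; simp [cyl]]
  exact .iInter fun i => measurable_pi_apply _ (hA _)

variable {n m : ℕ} {τ : ℕ → ℕ} {β : Fin n → Fin m}

theorem preimage_comp_cyl_comp (hβ : Surjective β) (hτβ : ∀ i : Fin n, τ i = β i) (v : Fin m → ι) :
    (fun (x : ℕ → X) j => x (τ j)) ⁻¹' cyl A n (v ∘ β) = cyl A m v := by
  ext x
  simp only [cyl, Set.mem_preimage, Set.mem_ofPred_eq, comp_apply, hτβ]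
  exact (hβ.forall (p := fun j => x j ∈ A (v j))).symm

theorem preimage_comp_cyl_eq_empty (hA : Pairwise (Disjoint on A)) (hβ : Surjective β)
    (hτβ : ∀ i : Fin n, τ i = β i) {w : Fin n → ι} (hw : w ∉ Set.range (· ∘ β)) :
    (fun (x : ℕ → X) j => x (τ j)) ⁻¹' cyl A n w = ∅ := by
  refine Set.eq_empty_of_forall_notMem fun x hx => hw ⟨w ∘ surjInv hβ, funext fun i => ?_⟩
  have hmem : ∀ i, x (β i) ∈ A (w i) := fun i => hτβ i ▸ hx i
  have hsame : β (surjInv hβ (β i)) = β i := surjInv_eq hβ _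
  by_contra hne
  exact Set.disjoint_left.1 (hA hne) (hsame ▸ hmem (surjInv hβ (β i))) (hmem i)

theorem partEnt_map_comp_cyl [MeasurableSpace X] (μ : Measure (ℕ → X))
    [Fintype ι] (hA_meas : ∀ i, MeasurableSet (A i)) (hA_disj : Pairwise (Disjoint on A))
    (hτ : ∀ i < n, τ i < m) (hτ_surj : ∀ j < m, ∃ i < n, τ i = j) :
    partEnt (μ.map fun x j => x (τ j)) (cyl A n) = partEnt μ (cyl A m) := by
  set β : Fin n → Fin m := fun i => ⟨τ i, hτ i i.2⟩
  have hβ : Surjective β := fun j => by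
    obtain ⟨i, hi, hij⟩ := hτ_surj j j.2
    exact ⟨⟨i, hi⟩, Fin.ext hij⟩
  have hτβ : ∀ i : Fin n, τ i = β i := fun _ => rfl
  rw [partEnt_map μ (measurable_pi_lambda _ fun j => measurable_pi_apply (τ j))
      (measurableSet_cyl hA_meas n),
    ← partEnt_comp_of_measure_eq_zero μ hβ.injective_comp_right
      fun w hw => by rw [preimage_comp_cyl_eq_empty hA_disj hβ hτβ hw, measure_empty]]
  exact congrArg (partEnt μ) (funext (preimage_comp_cyl_comp hβ hτβ))

end Cylinders

section Dilation

variable {X ι : Type*} [MeasurableSpace X] [Fintype ι] {A : ι → Set X} {k : ℕ}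

theorem partEnt_map_dilation_cyl (μ : Measure (ℕ → X)) (hA_meas : ∀ i, MeasurableSet (A i))
    (hA_disj : Pairwise (Disjoint on A)) (hk : 0 < k) (n : ℕ) :
    partEnt (μ.map fun x j => x (j / k)) (cyl A n) = partEnt μ (cyl A (n ⌈/⌉ k)) := by
  refine partEnt_map_comp_cyl μ hA_meas hA_disj (fun i hi => ?_) fun j hj => ⟨k * j, ?_, ?_⟩
  · rw [← not_le, ceilDiv_le_iff_le_mul hk, not_le]
    exact (Nat.mul_div_le i k).trans_lt hi
  · rwa [← not_le, ← ceilDiv_le_iff_le_mul hk, not_le]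
  · exact Nat.mul_div_cancel_left j hk

theorem limsup_comp_ceilDiv_div (hk : 0 < k) {g : ℕ → ℝ} (hg : ∀ n, 0 ≤ g n) :
    limsup (fun n : ℕ => ((g (n ⌈/⌉ k) / n : ℝ) : EReal)) atTop
      = ((1 / (k : ℝ) : ℝ) : EReal) * limsup (fun n : ℕ => ((g n / n : ℝ) : EReal)) atTop := by
  set u : ℕ → EReal := fun m => ((g m / m : ℝ) : EReal)
  have hfactor : (fun n : ℕ => ((g (n ⌈/⌉ k) / n : ℝ) : EReal)) =ᶠ[atTop]
      (fun n : ℕ => (((n ⌈/⌉ k : ℕ) / n : ℝ) : EReal)) * (u ∘ fun n => n ⌈/⌉ k) := by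
    filter_upwards [(Nat.tendsto_ceilDiv_atTop hk).eventually_gt_atTop 0] with n hn
    have : ((n ⌈/⌉ k : ℕ) : ℝ) ≠ 0 := by exact_mod_cast hn.ne'
    simp only [Pi.mul_apply, comp_apply, u, ← EReal.coe_mul]
    congr 1
    field_simp
  have hlim := EReal.tendsto_coe.2 (Nat.tendsto_ceilDiv_div hk)
  rw [limsup_congr hfactor, EReal.limsup_mul_of_tendsto hlim (EReal.coe_pos.2 (by positivity))
      (EReal.coe_ne_top _) (v := u ∘ fun n => n ⌈/⌉ k)
      (.of_forall fun _ => EReal.coe_nonneg.2 (div_nonneg (hg _) (Nat.cast_nonneg _))),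
    limsup_comp_of_leftInverse (Nat.tendsto_ceilDiv_atTop hk)
      (tendsto_id.const_mul_atTop' hk) (smul_ceilDiv hk)]

theorem HsdP_map_dilation (μ : Measure (ℕ → X)) [IsProbabilityMeasure μ]
    (hA_meas : ∀ i, MeasurableSet (A i)) (hA_disj : Pairwise (Disjoint on A)) (hk : 0 < k) :
    HsdP (μ.map fun x j => x (j / k)) A = ((1 / (k : ℝ) : ℝ) : EReal) * HsdP μ A := by
  simp only [HsdP, partEnt_map_dilation_cyl μ hA_meas hA_disj hk]
  exact limsup_comp_ceilDiv_div hk (g := fun n => partEnt μ (cyl A n)) fun n => partEnt_nonneg μ _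

end Dilation

/-- for the `k`-dilation `𝔇`, `H^sd(𝔇_*μ) = (1/k)·H^sd(μ)`. -/
theorem hsd_dilation {X : Type*} [MeasurableSpace X]
    (μ : Measure (ℕ → X)) [IsProbabilityMeasure μ] (k : ℕ) (hk : 1 ≤ k) :
    Hsd (Measure.map (fun x : ℕ → X => fun n => x (n / k)) μ) =
      ((1 / (k : ℝ) : ℝ) : EReal) * Hsd μ := by
  have hc : (0 : EReal) < ((1 / (k : ℝ) : ℝ) : EReal) := EReal.coe_pos.2 (by positivity)
  simp only [Hsd, EReal.mul_iSup_of_pos hc (EReal.coe_ne_top _)]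
  exact iSup_congr fun m => iSup_congr fun A => iSup_congr fun hA =>
    HsdP_map_dilation μ hA.meas hA.disj hk
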